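/- arXiv:1209.4956 — 2 statements merged into one kernel-verified Lean document; each statement's English description precedes it below -/
import Mathlib

section
/- Relation (X1): Let u be a 0-grassmannian affine permutation, let a < b < c < d be integers with b − a ≤ k and d − c ≤ k, and set q = (b − a) + (d − c). Suppose q < n, a ≡ d (mod n), u(c) ≤ 0, and u(d) ≤ 0. If the composite u·t_{a,b}·t_{c,d} is defined, then the composite u·t_{d,c+q}·t_{b−q,a} is defined and the two resulting affine permutations are equal. -/
open Function

/-- The affine transposition `t_{a,b}` of period `n`: it exchanges `a + m*n` and
`b + m*n` for every `m : ℤ` and fixes all other integers. -/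
def affT (n a b : ℤ) : ℤ → ℤ := fun i =>
  if (i - a) % n = 0 then i - a + b
  else if (i - b) % n = 0 then i - b + a
  else i

/-- `u` is an affine permutation of period `n`: a bijection of `ℤ` with
`u (i + n) = u i + n` and `∑_{i=1}^{n} u i = n (n+1) / 2`. -/
def IsAffinePerm (n : ℤ) (u : ℤ → ℤ) : Prop :=
  Function.Bijective u ∧ (∀ i : ℤ, u (i + n) = u i + n) ∧
    ∑ i ∈ Finset.Icc (1 : ℤ) n, u i = n * (n + 1) / 2

/-- The operator `t_{a,b}` is defined at `u`:
`u a ≤ 0 < u b` and for every `a < i < b`, either `u i < u a` or `u i > u b`. -/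
def DefinedAt (u : ℤ → ℤ) (a b : ℤ) : Prop :=
  u a ≤ 0 ∧ 0 < u b ∧ ∀ i : ℤ, a < i → i < b → u i < u a ∨ u b < u i

/-- `u` is 0-grassmannian: the positions of the values `1, 2, …, n` under `u`
appear in increasing order, i.e. `u⁻¹ 1 < u⁻¹ 2 < ⋯ < u⁻¹ n`. -/
def IsGrassmannian (n : ℤ) (u : ℤ → ℤ) : Prop :=
  ∀ i j p q : ℤ, 1 ≤ i → i < j → j ≤ n → u p = i → u q = j → p < q

/-- The composite `u · t_{a,b} · t_{c,d}` is defined. -/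
def Def2 (n : ℤ) (u : ℤ → ℤ) (a b c d : ℤ) : Prop :=
  DefinedAt u a b ∧ DefinedAt (u ∘ affT n a b) c d

/-- The composite `u · t_{a₁,b₁} · t_{a₂,b₂} · t_{a₃,b₃}` is defined. -/
def Def3 (n : ℤ) (u : ℤ → ℤ) (a₁ b₁ a₂ b₂ a₃ b₃ : ℤ) : Prop :=
  DefinedAt u a₁ b₁ ∧ DefinedAt (u ∘ affT n a₁ b₁) a₂ b₂ ∧
    DefinedAt ((u ∘ affT n a₁ b₁) ∘ affT n a₂ b₂) a₃ b₃

/-!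
Since `a ≡ d (mod n)` and `(c + q) - b = d - a`, the pairs `(d, c + q)` and `(b - q, a)` are the
translates of `(a, b)` and `(c, d)` by the same multiple `m n` of the period, so they give the same
affine transpositions and the two composites agree. Definedness transfers along the translation:
the betweenness condition is translation invariant for a map commuting with `· + n`, and the sign
conditions follow from `u d ≤ 0`, from `(u · t_{a,b}) c ≤ 0` and from `m ≥ 0`.
-/

open Function

lemma affT_add_self (n a b i : ℤ) : affT n a b (i + n) = affT n a b i + n := by
  unfold affT
  rw [show i + n - a = i - a + n by ring, show i + n - b = i - b + n by ring,
    Int.add_emod_right, Int.add_emod_right]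
  split_ifs <;> ring

lemma affT_add_mul_add_mul (n a b m : ℤ) : affT n (a + m * n) (b + m * n) = affT n a b := by
  funext i
  unfold affT
  rw [show i - (a + m * n) = i - a + -m * n by ring, show i - (b + m * n) = i - b + -m * n by ring,
    Int.add_mul_emod_self_right, Int.add_mul_emod_self_right]
  split_ifs <;> ring

lemma affT_apply_left (n a b : ℤ) : affT n a b a = b := by
  simp [affT]

lemma apply_add_mul_of_apply_add {n : ℤ} {w : ℤ → ℤ} (hw : ∀ i, w (i + n) = w i + n) (i m : ℤ) :
    w (i + m * n) = w i + m * n := by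
  have hper : Periodic (fun i => w i - i) n := fun i => by simp only [hw]; ring
  have : w (i + m * n) - (i + m * n) = w i - i := hper.int_mul m i
  linarith

lemma comp_affT_add {n : ℤ} {u : ℤ → ℤ} (hu : ∀ i, u (i + n) = u i + n) (a b i : ℤ) :
    (u ∘ affT n a b) (i + n) = (u ∘ affT n a b) i + n := by
  simp only [comp_apply, affT_add_self, hu]

lemma DefinedAt.add_mul {n : ℤ} {w : ℤ → ℤ} (hw : ∀ i, w (i + n) = w i + n) {a b : ℤ}
    (h : DefinedAt w a b) (m : ℤ) (ha : w a + m * n ≤ 0) (hb : 0 < w b + m * n) :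
    DefinedAt w (a + m * n) (b + m * n) := by
  refine ⟨by rwa [apply_add_mul_of_apply_add hw], by rwa [apply_add_mul_of_apply_add hw],
    fun i hai hib => ?_⟩
  have hi := apply_add_mul_of_apply_add hw (i - m * n) m
  rw [sub_add_cancel] at hi
  simp only [apply_add_mul_of_apply_add hw, hi, add_lt_add_iff_right]
  exact h.2.2 _ (by linarith) (by linarith)

theorem stmt12_general (k : ℤ) (hk : 1 ≤ k) (u : ℤ → ℤ)
    (hu : IsAffinePerm (k + 1) u)
    (a b c d : ℤ) (hab : a < b) (hbc : b < c) (hcd : c < d)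
    (hmod : a % (k + 1) = d % (k + 1))
    (hud : u d ≤ 0)
    (hdef : Def2 (k + 1) u a b c d) :
    Def2 (k + 1) u d (c + ((b - a) + (d - c))) (b - ((b - a) + (d - c))) a ∧
      (u ∘ affT (k + 1) a b) ∘ affT (k + 1) c d =
        (u ∘ affT (k + 1) d (c + ((b - a) + (d - c)))) ∘
          affT (k + 1) (b - ((b - a) + (d - c))) a := by
  obtain ⟨-, hper, -⟩ := hu
  obtain ⟨hdef₁, hdef₂⟩ := hdef
  obtain ⟨m, hm⟩ := Int.ModEq.dvd hmod
  have hm0 : 0 ≤ m := by nlinarith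
  have hd : a + m * (k + 1) = d := by linarith
  have ha : d + -m * (k + 1) = a := by linarith
  rw [show c + ((b - a) + (d - c)) = b + m * (k + 1) by linarith,
    show b - ((b - a) + (d - c)) = c + -m * (k + 1) by linarith]
  have htab : affT (k + 1) d (b + m * (k + 1)) = affT (k + 1) a b := by
    rw [← hd, affT_add_mul_add_mul]
  have htcd : affT (k + 1) (c + -m * (k + 1)) a = affT (k + 1) c d := by
    rw [← ha, affT_add_mul_add_mul]
  refine ⟨⟨?_, ?_⟩, by rw [htab, htcd]⟩
  · rw [← hd]
    refine hdef₁.add_mul hper m (by rwa [← apply_add_mul_of_apply_add hper a m, hd]) ?_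
    nlinarith [hdef₁.2.1]
  · have hw := comp_affT_add hper a b
    have hshift := hdef₂.add_mul hw (-m) (by nlinarith [hdef₂.1])
      (by rw [← apply_add_mul_of_apply_add hw d, ha, comp_apply, affT_apply_left]; exact hdef₁.2.1)
    rw [htab]
    rwa [ha] at hshift

theorem stmt12 (k : ℤ) (hk : 1 ≤ k) (u : ℤ → ℤ)
    (hu : IsAffinePerm (k + 1) u) (hg : IsGrassmannian (k + 1) u)
    (a b c d : ℤ) (hab : a < b) (hbc : b < c) (hcd : c < d)
    (hba : b - a ≤ k) (hdc : d - c ≤ k)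
    (hq : (b - a) + (d - c) < k + 1)
    (hmod : a % (k + 1) = d % (k + 1))
    (huc : u c ≤ 0) (hud : u d ≤ 0)
    (hdef : Def2 (k + 1) u a b c d) :
    Def2 (k + 1) u d (c + ((b - a) + (d - c))) (b - ((b - a) + (d - c))) a ∧
      (u ∘ affT (k + 1) a b) ∘ affT (k + 1) c d =
        (u ∘ affT (k + 1) d (c + ((b - a) + (d - c)))) ∘
          affT (k + 1) (b - ((b - a) + (d - c))) a :=
  stmt12_general k hk u hu a b c d hab hbc hcd hmod hud hdef
end

section
/- Relation (X4): Let u be a 0-grassmannian affine permutation, let a < b < c < d be integers with b − a ≤ k and d − c ≤ k, and set q = (b − a) + (d − c). Suppose q < n, b ≡ c (mod n), u(b) > 0, and u(a+q) > 0. If the composite u·t_{a,b}·t_{c,d} is defined, then the composite u·t_{d−q,c}·t_{b,a+q} is defined and the two resulting affine permutations are equal. -/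
open Function

/-!
Write `c = b + t n` (from `b ≡ c`). Then `d - q = a + t n` and `d = (a + q) + t n`, and an affine
transposition only depends on its endpoints modulo `n`, so `t_{d-q,c} = t_{a,b}` and
`t_{b,a+q} = t_{c,d}`: the two composites agree. Definedness is transported by translating by
`± t n`, under which both `u` and `u · t_{a,b}` are equivariant; only the sign conditions at the
endpoints need an argument, and they come from `u b > 0`, `t ≥ 0` and `u (a + q) > 0`.
-/

lemma map_add_mul_of_map_add {u : ℤ → ℤ} {n : ℤ} (hu : ∀ i, u (i + n) = u i + n) (s i : ℤ) :
    u (i + s * n) = u i + s * n := by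
  have hper : Periodic (fun i => u i - i) n := fun i => by
    show u (i + n) - (i + n) = u i - i
    rw [hu]
    ring
  have : u (i + s * n) - (i + s * n) = u i - i := hper.int_mul s i
  linarith

lemma affT_add_mul (n a b s : ℤ) : affT n (a + s * n) (b + s * n) = affT n a b := by
  funext i
  simp only [affT, show ∀ x, i - (x + s * n) = i - x + n * -s from fun x => by ring,
    Int.add_mul_emod_self_left]
  split_ifs <;> ring

lemma affT_apply_add_mul (n a b s i : ℤ) : affT n a b (i + s * n) = affT n a b i + s * n := by
  simp only [affT, show ∀ x, i + s * n - x = i - x + n * s from fun x => by ring,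
    Int.add_mul_emod_self_left]
  split_ifs <;> ring

lemma affT_apply_right {n a b : ℤ} (h : (b - a) % n ≠ 0) : affT n a b b = a := by
  simp [affT, h]

lemma affT_apply_of_emod_ne_zero {n a b i : ℤ} (ha : (i - a) % n ≠ 0) (hb : (i - b) % n ≠ 0) :
    affT n a b i = i := by
  simp [affT, ha, hb]

lemma emod_ne_zero_of_pos_of_lt {x n : ℤ} (h0 : 0 < x) (hn : x < n) : x % n ≠ 0 := by
  rw [Int.emod_eq_of_lt h0.le hn]
  exact h0.ne'

lemma DefinedAt.translate {v : ℤ → ℤ} {a b s : ℤ} (hv : ∀ i, v (i + s) = v i + s)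
    (h : DefinedAt v a b) (ha : v a + s ≤ 0) (hb : 0 < v b + s) :
    DefinedAt v (a + s) (b + s) := by
  obtain ⟨-, -, hwin⟩ := h
  refine ⟨by rwa [hv], by rwa [hv], fun i hai hib => ?_⟩
  have hi : v i = v (i - s) + s := by simpa using hv (i - s)
  rw [hv, hv, hi]
  rcases hwin (i - s) (by linarith) (by linarith) with h | h
  · exact Or.inl (by linarith)
  · exact Or.inr (by linarith)

lemma Def2.translate {n : ℤ} {u : ℤ → ℤ} (hu : ∀ i, u (i + n) = u i + n) {a b p t : ℤ}
    (hab : a < b) (hbp : b < p) (hpa : p - a < n) (ht : 0 ≤ t) (hup : 0 < u p)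
    (h : Def2 n u a b (b + t * n) (p + t * n)) :
    Def2 n u (a + t * n) (b + t * n) b p := by
  obtain ⟨hdef₁, hdef₂⟩ := h
  set v := u ∘ affT n a b
  have hv (s i : ℤ) : v (i + s * n) = v i + s * n := by
    simp only [v, comp_apply, affT_apply_add_mul, map_add_mul_of_map_add hu]
  have hba : (b - a) % n ≠ 0 := emod_ne_zero_of_pos_of_lt (by omega) (by omega)
  have hpa' : (p - a) % n ≠ 0 := emod_ne_zero_of_pos_of_lt (by omega) hpa
  have hpb : (p - b) % n ≠ 0 := emod_ne_zero_of_pos_of_lt (by omega) (by omega)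
  have hvb : v b = u a := congrArg u (affT_apply_right hba)
  have hvp : v p = u p := congrArg u (affT_apply_of_emod_ne_zero hpa' hpb)
  have hvbt : v (b + t * n) = u a + t * n := by rw [hv, hvb]
  refine ⟨hdef₁.translate (map_add_mul_of_map_add hu t) (hvbt ▸ hdef₂.1) ?_, ?_⟩
  · nlinarith [hdef₁.2.1]
  · rw [affT_add_mul]
    have hback := hdef₂.translate (hv (-t)) (by rw [hvbt]; linarith [hdef₁.1])
      (by rw [hv, hvp]; linarith)
    simpa only [neg_mul, add_neg_cancel_right] using hback

theorem stmt15_general (k : ℤ) (u : ℤ → ℤ)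
    (hu : IsAffinePerm (k + 1) u)
    (a b c d : ℤ) (hab : a < b) (hbc : b < c) (hcd : c < d)
    (hq : (b - a) + (d - c) < k + 1)
    (hmod : b % (k + 1) = c % (k + 1))
    (huaq : 0 < u (a + ((b - a) + (d - c))))
    (hdef : Def2 (k + 1) u a b c d) :
    Def2 (k + 1) u (d - ((b - a) + (d - c))) c b (a + ((b - a) + (d - c))) ∧
      (u ∘ affT (k + 1) a b) ∘ affT (k + 1) c d =
        (u ∘ affT (k + 1) (d - ((b - a) + (d - c))) c) ∘
          affT (k + 1) b (a + ((b - a) + (d - c))) := by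
  obtain ⟨t, ht⟩ := Int.ModEq.dvd hmod
  have ht0 : 0 ≤ t := by nlinarith
  rw [show d - ((b - a) + (d - c)) = a + t * (k + 1) by linear_combination ht]
  have hpa : a + ((b - a) + (d - c)) - a < k + 1 := by omega
  have hbp : b < a + ((b - a) + (d - c)) := by omega
  generalize hp : a + ((b - a) + (d - c)) = p at huaq hpa hbp ⊢
  obtain rfl : c = b + t * (k + 1) := by linear_combination ht
  obtain rfl : d = p + t * (k + 1) := by linear_combination hp
  exact ⟨hdef.translate hu.2.1 hab hbp hpa ht0 huaq, by rw [affT_add_mul, affT_add_mul]⟩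

theorem stmt15 (k : ℤ) (hk : 1 ≤ k) (u : ℤ → ℤ)
    (hu : IsAffinePerm (k + 1) u) (hg : IsGrassmannian (k + 1) u)
    (a b c d : ℤ) (hab : a < b) (hbc : b < c) (hcd : c < d)
    (hba : b - a ≤ k) (hdc : d - c ≤ k)
    (hq : (b - a) + (d - c) < k + 1)
    (hmod : b % (k + 1) = c % (k + 1))
    (hub : 0 < u b) (huaq : 0 < u (a + ((b - a) + (d - c))))
    (hdef : Def2 (k + 1) u a b c d) :
    Def2 (k + 1) u (d - ((b - a) + (d - c))) c b (a + ((b - a) + (d - c))) ∧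
      (u ∘ affT (k + 1) a b) ∘ affT (k + 1) c d =
        (u ∘ affT (k + 1) (d - ((b - a) + (d - c))) c) ∘
          affT (k + 1) b (a + ((b - a) + (d - c))) :=
  stmt15_general k u hu a b c d hab hbc hcd hq hmod huaq hdef
end
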